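/- Let V be a finite-dimensional vector space over ℂ of dimension m, let M : Σ → (V →ₗ[ℂ] V) (extended to words by composition), let v₀ ∈ V, and let f : V →ₗ[ℂ] ℂ. If f(M(w) v₀) = 0 for all words w of length ≤ m - 1, then f(M(w) v₀) = 0 for all words w. -/
import Mathlib


/-- Core linear-algebraic lemma behind the equivalence criterion for MO-1QFAs:
a linear functional vanishing on all states reachable by words of length at most
`dim V - 1` vanishes on all reachable states. -/
theorem stmt_15 (V : Type*) [AddCommGroup V] [Module ℂ V] [FiniteDimensional ℂ V]
    (A : Type*) (M : A → (V →ₗ[ℂ] V))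
    (Mw : List A → (V →ₗ[ℂ] V))
    (hnil : Mw [] = LinearMap.id)
    (hcons : ∀ (σ : A) (w : List A), Mw (σ :: w) = (Mw w) ∘ₗ (M σ))
    (v₀ : V) (f : V →ₗ[ℂ] ℂ)
    (h : ∀ w : List A, w.length ≤ Module.finrank ℂ V - 1 → f (Mw w v₀) = 0) :
    ∀ w : List A, f (Mw w v₀) = 0 := by
  by_cases hf : f = 0
  · intro w; simp [hf]
  set m := Module.finrank ℂ V with hm
  -- the dual functionals
  set g : List A → Module.Dual ℂ V := fun u => f.comp (Mw u) with hgdef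
  have hgcons : ∀ (σ : A) (u : List A), g (σ :: u) = (M σ).dualMap (g u) := by
    intro σ u
    ext x
    simp [hgdef, hcons]
  -- the increasing chain of spans in the dual
  set T : ℕ → Submodule ℂ (Module.Dual ℂ V) := fun k =>
    Submodule.span ℂ {φ | ∃ u : List A, u.length ≤ k ∧ g u = φ} with hTdef
  have hmono : ∀ {j k : ℕ}, j ≤ k → T j ≤ T k := by
    intro j k hjk
    apply Submodule.span_mono
    rintro φ ⟨u, hu, rfl⟩
    exact ⟨u, hu.trans hjk, rfl⟩
  have hmem : ∀ (u : List A) (k : ℕ), u.length ≤ k → g u ∈ T k := by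
    intro u k hu
    exact Submodule.subset_span ⟨u, hu, rfl⟩
  -- step: once stabilized, always stabilized
  have hstep : ∀ k : ℕ, T (k + 1) ≤ T k → T (k + 2) ≤ T (k + 1) := by
    intro k hk
    rw [hTdef]
    apply Submodule.span_le.2
    rintro φ ⟨u, hu, rfl⟩
    match u with
    | [] => exact hmem [] (k+1) (by simp)
    | σ :: w =>
      have hw : w.length ≤ k + 1 := by simpa using hu
      have hwm : g w ∈ T k := hk (hmem w (k+1) hw)
      have hmap : Submodule.map ((M σ).dualMap) (T k) ≤ T (k + 1) := by
        simp only [hTdef]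
        rw [Submodule.map_span]
        apply Submodule.span_le.2
        rintro ψ ⟨φ, ⟨u', hu', rfl⟩, rfl⟩
        rw [← hgcons]
        exact hmem (σ :: u') (k+1) (by simpa using hu')
      rw [hgcons]
      exact hmap (Submodule.mem_map_of_mem hwm)
  have hstab : ∀ k : ℕ, T (k + 1) ≤ T k → ∀ n : ℕ, k ≤ n → T n ≤ T k := by
    intro k hk n hn
    induction n with
    | zero => exact hmono (Nat.le_zero.mp hn ▸ le_refl k)
    | succ n ih =>
      rcases Nat.lt_or_ge k (n+1) with hlt | hge
      · have hkn : k ≤ n := Nat.lt_succ_iff.mp hlt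
        have hTn : T n ≤ T k := ih hkn
        -- T (n+1) ≤ T n: by induction on n - k using hstep
        have key : ∀ j : ℕ, T (k + 1 + j) ≤ T (k + j) := by
          intro j
          induction j with
          | zero => simpa using hk
          | succ j ihj =>
            have ihj' : T (k + j + 1) ≤ T (k + j) := by
              rwa [show k + 1 + j = k + j + 1 from by ring] at ihj
            have := hstep (k + j) ihj'
            rw [show k + 1 + (j + 1) = k + j + 2 from by ring,
              show k + (j + 1) = k + j + 1 from by ring]
            exact this
        have : T (n + 1) ≤ T n := by
          have := key (n - k)
          rwa [show k + 1 + (n - k) = k + (n - k) + 1 from by ring,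
            Nat.add_sub_cancel' hkn] at this
        exact this.trans hTn
      · exact hmono hge
  -- find a stabilization point k ≤ m - 1
  have hne : ∃ k : ℕ, k ≤ m - 1 ∧ T (k + 1) ≤ T k := by
    by_contra hcon
    push_neg at hcon
    have hstrict : ∀ k : ℕ, k ≤ m - 1 → T k < T (k + 1) := by
      intro k hk
      exact lt_of_le_of_ne (hmono (Nat.le_succ k)) (fun he => hcon k hk (le_of_eq he.symm))
    have hdim : ∀ k : ℕ, k ≤ m → k + 1 ≤ Module.finrank ℂ (T k) := by
      intro k
      induction k with
      | zero =>
        intro _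
        have hfT : f ∈ T 0 := by
          have : g [] = f := by ext x; simp [hgdef, hnil]
          exact this ▸ hmem [] 0 (by simp)
        have : T 0 ≠ ⊥ := by
          intro hbot
          exact hf (by simpa [hbot] using hfT)
        have : 0 < Module.finrank ℂ (T 0) :=
          Module.finrank_pos_iff.mpr (Submodule.nontrivial_iff_ne_bot.mpr this)
        omega
      | succ k ih =>
        intro hk1
        have hk : k ≤ m := Nat.le_of_succ_le hk1
        have hk' : k ≤ m - 1 := by omega
        have hlt := Submodule.finrank_lt_finrank_of_lt (hstrict k hk')
        have := ih hk
        omega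
    have hm1 : m ≤ Module.finrank ℂ (Module.Dual ℂ V) := by
      have := hdim m (le_refl m)
      have hle := Submodule.finrank_le (T m)
      omega
    have hdual : Module.finrank ℂ (Module.Dual ℂ V) = m := by
      rw [hm]; exact Subspace.dual_finrank_eq
    have := hdim m (le_refl m)
    have hle := Submodule.finrank_le (T m)
    omega
  obtain ⟨k, hk, hkstab⟩ := hne
  -- T k is contained in the kernel of evaluation at v₀
  have hker : T k ≤ LinearMap.ker (Module.Dual.eval ℂ V v₀) := by
    rw [hTdef]
    apply Submodule.span_le.2
    rintro φ ⟨u, hu, rfl⟩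
    simp only [SetLike.mem_coe, LinearMap.mem_ker, Module.Dual.eval_apply]
    exact h u (hu.trans hk)
  intro w
  have hw : g w ∈ T k := by
    rcases Nat.lt_or_ge w.length (k + 1) with hl | hl
    · exact hmem w k (Nat.lt_succ_iff.mp hl)
    · exact hstab k hkstab w.length (Nat.le_of_succ_le hl) (hmem w w.length le_rfl)
  have := hker hw
  simpa [hgdef] using this
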